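/- arXiv:2604.04396 — 2 statements merged into one kernel-verified Lean document; each statement's English description precedes it below -/
import Mathlib

section
/- Let (·,·): F × F → ℚ(q) be the unique bilinear form on the free superalgebra F satisfying (1,1)=1, (a_{il}, a_{jk}) = δ_{ij}δ_{lk}(1-(-1)^{p(li)} q_i^{2l})^{-1}, (x, yy') = (ϱ(x), y⊗y'), and (xx', y) = (x⊗x', ϱ(y)). Then for all x, x' ∈ F one has (σ(x), σ(x')) = (x, x'), where σ is the anti-automorphism fixing the generators. -/
open scoped BigOperators

noncomputable section

/-- The base field `ℚ(q)`. -/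
abbrev K : Type := RatFunc ℚ

/-- The indeterminate `q`. -/
def qq : K := RatFunc.X

/-- Words in the generators `a_{il}`, `(i,l) ∈ I^∞ = I × ℤ_{>0}`. -/
abbrev Word (I : Type) := FreeMonoid (I × ℕ+)

/-- The parity of a word: the sum of the parities `l·p(i)` of its letters. -/
def wP {I : Type} (p : I → ℕ) (w : Word I) : ℕ :=
  ((FreeMonoid.toList w).map fun a => (a.2 : ℕ) * p a.1).sum

/-- The pairing `(|w|, |w'|)` of the weights of two words, where the letter
`(i,l)` has weight `l·α_i` and `(α_i, α_j) = B i j`. -/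
def wB {I : Type} (B : I → I → ℤ) (w w' : Word I) : ℤ :=
  ((FreeMonoid.toList w).map fun a =>
    (((FreeMonoid.toList w').map fun b => (a.2 : ℤ) * (b.2 : ℤ) * B a.1 b.1)).sum).sum

/-- The weight of a word in the root lattice `Q = ⊕ ℤα_i`. -/
def wWt {I : Type} (w : Word I) : I →₀ ℤ :=
  ((FreeMonoid.toList w).map fun a => Finsupp.single a.1 (a.2 : ℤ)).sum

/-- The free associative `ℚ(q)`-superalgebra `F` on the generators `a_{il}`. -/
abbrev F (I : Type) := MonoidAlgebra K (Word I)

/-- The underlying vector space of `F ⊗ F`, with basis the pairs of words. -/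
abbrev M (I : Type) := (Word I × Word I) →₀ K

/-- The basis element of `F` corresponding to a word. -/
def toF {I : Type} (w : Word I) : F I := MonoidAlgebra.single w 1

/-- The generator `a_{il}` of `F`. -/
def gen {I : Type} (i : I) (l : ℕ+) : F I := toF (FreeMonoid.of (i, l))

/-- The twisted multiplication on `F ⊗ F`:
`(x₁⊗x₂)(x₃⊗x₄) = (-1)^{p(x₂)p(x₃)} q^{(|x₂|,|x₃|)} x₁x₃ ⊗ x₂x₄`. -/
def twmul {I : Type} (p : I → ℕ) (B : I → I → ℤ) (f g : M I) : M I :=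
  f.sum fun a ca => g.sum fun b cb =>
    Finsupp.single (a.1 * b.1, a.2 * b.2)
      (ca * cb * (-1 : K) ^ (wP p a.2 * wP p b.1) * qq ^ (wB B a.2 b.1))

/-- Word reversal. -/
def wrev {I : Type} (w : Word I) : Word I :=
  FreeMonoid.ofList (FreeMonoid.toList w).reverse

/-- The anti-automorphism `σ` of `F` fixing each generator `a_{il}`:
it reverses every word. -/
def sigmaF {I : Type} : F I → F I := MonoidAlgebra.mapDomain wrev


/-! The anti-automorphism `σ` intertwines the coproduct with the flip
`Ψ(u ⊗ v) = σ(v) ⊗ σ(u)`: `ρ(σ w) = Ψ(ρ w)`. Both sides agree on generators, and `Ψ` reverses the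
order of twisted products because the sign `(-1)^{p(x₂)p(x₃)}` and the power `q^{(|x₂|,|x₃|)}` are
symmetric when `(·,·)` on weights is. Writing `σ(a·t) = σ(t)·a` and expanding
`(σ w, σ t · a) = (ρ(σ w), σ t ⊗ a)` then reduces `(σ w, σ(a·t)) = (w, a·t)` by induction on `t` to
`(σ u, a) = (u, a)` for a generator `a`, which holds because `(u, a)` vanishes unless `u` is a
single letter. -/

section Words

variable {I : Type}

theorem toList_reverse (w : Word I) :
    FreeMonoid.toList w.reverse = (FreeMonoid.toList w).reverse := rfl

theorem wP_reverse (p : I → ℕ) (w : Word I) : wP p w.reverse = wP p w := by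
  simp [wP, toList_reverse, List.map_reverse, List.sum_reverse]

theorem wB_reverse_reverse {B : I → I → ℤ} (hB : ∀ i j, B i j = B j i) (u v : Word I) :
    wB B v.reverse u.reverse = wB B u v := by
  simp only [wB, toList_reverse, List.map_reverse, List.sum_reverse]
  simp only [← Multiset.sum_coe, ← Multiset.map_coe]
  rw [Multiset.sum_map_sum_map]
  simp only [hB, mul_comm]

theorem toF_one : toF (1 : Word I) = 1 := rfl

theorem toF_mul (u v : Word I) : toF (u * v) = toF u * toF v := by
  simp [toF, MonoidAlgebra.single_mul_single]

theorem toF_of (a : I × ℕ+) : toF (FreeMonoid.of a) = gen a.1 a.2 := rfl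

end Words

section TwistedTensor

variable {I : Type} {p : I → ℕ} {B : I → I → ℤ}

theorem twmul_single_single (a b : Word I × Word I) (ca cb : K) :
    twmul p B (Finsupp.single a ca) (Finsupp.single b cb) =
      Finsupp.single (a.1 * b.1, a.2 * b.2)
        (ca * cb * (-1 : K) ^ (wP p a.2 * wP p b.1) * qq ^ (wB B a.2 b.1)) := by
  simp [twmul]

theorem twmul_zero_left (g : M I) : twmul p B 0 g = 0 := by
  simp [twmul]

theorem twmul_zero_right (f : M I) : twmul p B f 0 = 0 := by
  simp [twmul]

theorem twmul_add_left (f f' g : M I) :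
    twmul p B (f + f') g = twmul p B f g + twmul p B f' g := by
  unfold twmul
  refine Finsupp.sum_add_index' (fun a => by simp) fun a c c' => ?_
  simp only [add_mul, Finsupp.single_add, Finsupp.sum_add]

theorem twmul_add_right (f g g' : M I) :
    twmul p B f (g + g') = twmul p B f g + twmul p B f g' := by
  unfold twmul
  rw [← Finsupp.sum_add]
  refine Finsupp.sum_congr fun a _ => Finsupp.sum_add_index' (fun b => by simp) fun b c c' => ?_
  simp only [mul_add, add_mul, Finsupp.single_add]

def flipReverse : M I →+ M I :=
  Finsupp.mapDomain.addMonoidHom fun ab => (ab.2.reverse, ab.1.reverse)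

theorem flipReverse_single (ab : Word I × Word I) (c : K) :
    flipReverse (Finsupp.single ab c) = Finsupp.single (ab.2.reverse, ab.1.reverse) c :=
  Finsupp.mapDomain_single

theorem sum_flipReverse (f : M I) (h : Word I × Word I → K → K)
    (h_zero : ∀ ab, h ab 0 = 0) (h_add : ∀ ab c c', h ab (c + c') = h ab c + h ab c') :
    (flipReverse f).sum h = f.sum fun ab c => h (ab.2.reverse, ab.1.reverse) c :=
  Finsupp.sum_mapDomain_index h_zero h_add

theorem flipReverse_twmul (hB : ∀ i j, B i j = B j i) (f g : M I) :
    flipReverse (twmul p B f g) = twmul p B (flipReverse g) (flipReverse f) := by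
  induction f using Finsupp.induction_linear with
  | zero => simp [twmul_zero_left, twmul_zero_right]
  | add f f' hf hf' => simp only [twmul_add_left, twmul_add_right, map_add, hf, hf']
  | single a ca =>
    induction g using Finsupp.induction_linear with
    | zero => simp [twmul_zero_left, twmul_zero_right]
    | add g g' hg hg' => simp only [twmul_add_left, twmul_add_right, map_add, hg, hg']
    | single b cb =>
      simp only [twmul_single_single, flipReverse_single, FreeMonoid.reverse_mul, wP_reverse,
        wB_reverse_reverse hB]
      congr 1
      ring

end TwistedTensor

section Pairing

variable {I : Type}

structure IsTwistedCoproduct (p : I → ℕ) (B : I → I → ℤ) (rho : F I →ₗ[K] M I) : Prop where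
  map_one : rho 1 = Finsupp.single (1, 1) 1
  map_mul : ∀ x y : F I, rho (x * y) = twmul p B (rho x) (rho y)
  map_gen : ∀ (i : I) (l : ℕ+),
    rho (gen i l) = Finsupp.single (FreeMonoid.of (i, l), 1) 1
      + Finsupp.single (1, FreeMonoid.of (i, l)) 1

structure IsCoproductPairing (rho : F I →ₗ[K] M I) (Bf : F I →ₗ[K] F I →ₗ[K] K) : Prop where
  one_one : Bf 1 1 = 1
  mul_right : ∀ x y y' : F I,
    Bf x (y * y') = (rho x).sum fun ab c => c * Bf (toF ab.1) y * Bf (toF ab.2) y'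
  mul_left : ∀ x x' y : F I,
    Bf (x * x') y = (rho y).sum fun ab c => c * Bf x (toF ab.1) * Bf x' (toF ab.2)

variable {p : I → ℕ} {B : I → I → ℤ} {rho : F I →ₗ[K] M I} {Bf : F I →ₗ[K] F I →ₗ[K] K}

theorem IsTwistedCoproduct.sum_gen {N : Type} [AddCommMonoid N] (hrho : IsTwistedCoproduct p B rho)
    (i : I) (l : ℕ+) (h : Word I × Word I → K → N) (h_zero : ∀ ab, h ab 0 = 0)
    (h_add : ∀ ab c c', h ab (c + c') = h ab c + h ab c') :
    (rho (gen i l)).sum h = h (FreeMonoid.of (i, l), 1) 1 + h (1, FreeMonoid.of (i, l)) 1 := by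
  rw [hrho.map_gen, Finsupp.sum_add_index' h_zero h_add, Finsupp.sum_single_index (h_zero _),
    Finsupp.sum_single_index (h_zero _)]

theorem IsTwistedCoproduct.map_toF_reverse (hrho : IsTwistedCoproduct p B rho)
    (hB : ∀ i j, B i j = B j i) (w : Word I) :
    rho (toF w.reverse) = flipReverse (rho (toF w)) := by
  induction w using FreeMonoid.inductionOn' with
  | one =>
    show rho (toF 1) = flipReverse (rho (toF 1))
    rw [toF_one, hrho.map_one, flipReverse_single]
    rfl
  | of_mul a w ih =>
    have hgen_fixed : flipReverse (rho (gen a.1 a.2)) = rho (gen a.1 a.2) := by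
      rw [hrho.map_gen, map_add, flipReverse_single, flipReverse_single, add_comm]; rfl
    rw [FreeMonoid.reverse_mul, FreeMonoid.reverse_of, toF_mul, toF_mul, toF_of, hrho.map_mul,
      hrho.map_mul, ih, flipReverse_twmul hB, hgen_fixed]

namespace IsCoproductPairing

theorem gen_one_eq_zero (hBf : IsCoproductPairing rho Bf)
    (hrho : IsTwistedCoproduct p B rho) (i : I) (l : ℕ+) : Bf (gen i l) 1 = 0 := by
  have h := hBf.mul_right (gen i l) 1 1
  rw [mul_one, hrho.sum_gen _ _ _ (fun _ => by ring) (fun _ _ _ => by ring), toF_one, toF_of,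
    hBf.one_one] at h
  linear_combination -h

theorem toF_one_eq_zero_of_ne_one (hBf : IsCoproductPairing rho Bf)
    (hrho : IsTwistedCoproduct p B rho) {w : Word I} (hw : w ≠ 1) : Bf (toF w) 1 = 0 := by
  cases w using FreeMonoid.casesOn with
  | one => exact absurd rfl hw
  | of_mul a u =>
    rw [toF_mul, toF_of, hBf.mul_left, hrho.map_one, Finsupp.sum_single_index (by simp), toF_one,
      hBf.gen_one_eq_zero hrho]
    ring

theorem toF_gen_eq_zero_of_two_le_length (hBf : IsCoproductPairing rho Bf)
    (hrho : IsTwistedCoproduct p B rho) {w : Word I} (hw : 2 ≤ w.length) (j : I) (k : ℕ+) :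
    Bf (toF w) (gen j k) = 0 := by
  cases w using FreeMonoid.casesOn with
  | one => simp at hw
  | of_mul a u =>
    have hu : u ≠ 1 := by
      rintro rfl
      simp at hw
    rw [toF_mul, toF_of, hBf.mul_left, hrho.sum_gen _ _ _ (fun _ => by ring) (fun _ _ _ => by ring),
      toF_one, hBf.gen_one_eq_zero hrho, hBf.toF_one_eq_zero_of_ne_one hrho hu]
    ring

theorem toF_reverse_gen (hBf : IsCoproductPairing rho Bf) (hrho : IsTwistedCoproduct p B rho)
    (w : Word I) (j : I) (k : ℕ+) : Bf (toF w.reverse) (gen j k) = Bf (toF w) (gen j k) := by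
  by_cases hw : 2 ≤ w.length
  · rw [hBf.toF_gen_eq_zero_of_two_le_length hrho hw, hBf.toF_gen_eq_zero_of_two_le_length hrho
      (by rwa [FreeMonoid.length_reverse])]
  · congr
    cases w using FreeMonoid.casesOn with
    | one => rfl
    | of_mul a u =>
      obtain rfl : u = 1 := by simpa [FreeMonoid.length_mul] using hw
      rfl

theorem toF_reverse_toF_reverse (hBf : IsCoproductPairing rho Bf)
    (hrho : IsTwistedCoproduct p B rho) (hB : ∀ i j, B i j = B j i) (w w' : Word I) :
    Bf (toF w.reverse) (toF w'.reverse) = Bf (toF w) (toF w') := by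
  induction w' using FreeMonoid.inductionOn' generalizing w with
  | one =>
    obtain rfl | hw := eq_or_ne w 1
    · rfl
    · have hw' : w.reverse ≠ 1 := fun h =>
        hw (by rw [← FreeMonoid.reverse_reverse (a := w), h]; rfl)
      exact (hBf.toF_one_eq_zero_of_ne_one hrho hw').trans
        (hBf.toF_one_eq_zero_of_ne_one hrho hw).symm
  | of_mul a t ih =>
    rw [FreeMonoid.reverse_mul, FreeMonoid.reverse_of, toF_mul, toF_mul, toF_of, hBf.mul_right,
      hBf.mul_right, hrho.map_toF_reverse hB,
      sum_flipReverse _ _ (fun _ => by ring) (fun _ _ _ => by ring)]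
    refine Finsupp.sum_congr fun ab _ => ?_
    rw [ih, hBf.toF_reverse_gen hrho]
    ring

end IsCoproductPairing

end Pairing

theorem bilinear_sigma_invariant_general {I : Type}
    (p : I → ℕ) (B : I → I → ℤ) (hB : ∀ i j, B i j = B j i)
    (rho : F I →ₗ[K] M I)
    (hrho1 : rho 1 = Finsupp.single (1, 1) 1)
    (hrhomul : ∀ x y : F I, rho (x * y) = twmul p B (rho x) (rho y))
    (hrhogen : ∀ (i : I) (l : ℕ+),
      rho (gen i l) = Finsupp.single (FreeMonoid.of (i, l), 1) 1
        + Finsupp.single (1, FreeMonoid.of (i, l)) 1)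
    (Bf : F I →ₗ[K] F I →ₗ[K] K)
    (h11 : Bf 1 1 = 1)
    (hR : ∀ x y y' : F I,
      Bf x (y * y') = (rho x).sum fun ab c => c * Bf (toF ab.1) y * Bf (toF ab.2) y')
    (hL : ∀ x x' y : F I,
      Bf (x * x') y = (rho y).sum fun ab c => c * Bf x (toF ab.1) * Bf x' (toF ab.2))
    (x x' : F I) :
    Bf (sigmaF x) (sigmaF x') = Bf x x' := by
  have hBf : IsCoproductPairing rho Bf := ⟨h11, hR, hL⟩
  have hrho : IsTwistedCoproduct p B rho := ⟨hrho1, hrhomul, hrhogen⟩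
  let σ := MonoidAlgebra.mapDomainLinearMap K K (wrev (I := I))
  suffices h : Bf.compl₁₂ σ σ = Bf from LinearMap.congr_fun₂ h x x'
  ext w w'
  simp only [σ, LinearMap.comp_apply, LinearMap.compl₁₂_apply, MonoidAlgebra.lsingle_apply,
    MonoidAlgebra.mapDomainLinearMap_single]
  exact hBf.toF_reverse_toF_reverse hrho hB w w'

/-- Lusztig's bilinear form on `F` is invariant under the anti-automorphism `σ`:
`(σ(x), σ(x')) = (x, x')`. -/
theorem bilinear_sigma_invariant {I : Type} [DecidableEq I]
    (p : I → ℕ) (d : I → ℕ+) (B : I → I → ℤ) (hB : ∀ i j, B i j = B j i)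
    (rho : F I →ₗ[K] M I)
    (hrho1 : rho 1 = Finsupp.single (1, 1) 1)
    (hrhomul : ∀ x y : F I, rho (x * y) = twmul p B (rho x) (rho y))
    (hrhogen : ∀ (i : I) (l : ℕ+),
      rho (gen i l) = Finsupp.single (FreeMonoid.of (i, l), 1) 1
        + Finsupp.single (1, FreeMonoid.of (i, l)) 1)
    (Bf : F I →ₗ[K] F I →ₗ[K] K)
    (h11 : Bf 1 1 = 1)
    (hgen : ∀ (i : I) (l : ℕ+) (j : I) (k : ℕ+),
      Bf (gen i l) (gen j k) =
        if i = j ∧ l = k then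
          (1 - (-1 : K) ^ ((l : ℕ) * p i) * qq ^ (2 * (l : ℕ) * (d i : ℕ)))⁻¹
        else 0)
    (hR : ∀ x y y' : F I,
      Bf x (y * y') = (rho x).sum fun ab c => c * Bf (toF ab.1) y * Bf (toF ab.2) y')
    (hL : ∀ x x' y : F I,
      Bf (x * x') y = (rho y).sum fun ab c => c * Bf x (toF ab.1) * Bf x' (toF ab.2))
    (x x' : F I) :
    Bf (sigmaF x) (sigmaF x') = Bf x x' :=
  bilinear_sigma_invariant_general p B hB rho hrho1 hrhomul hrhogen Bf h11 hR hL x x'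
end
end

section
/- Let V = U_q(g)·v_λ be a highest weight module in the category O_int over the quantum Borcherds-Bozec superalgebra, with highest weight λ ∈ P. If i is a real index (a_{ii}=2), then ⟨h_i, λ⟩ ≥ 0, and moreover if i is odd (p(i)=1) then ⟨h_i, λ⟩ is even; consequently λ ∈ P⁺. -/
/-! For a real index `i` put `A = a_{i1}`, `B = b_{i1}`, `ε = (-1)^{p(i)}` and `n = ⟨h_i, λ⟩`.
The relation `A B = ε B A + (q_i^{h_i} - q_i^{-h_i}) / (1 - ε q_i²)`, together with the weights
`q^{n - 2m}` of the vectors `B^m v`, gives `A B^{m+1} v = c_m B^m v` with `c_m` a nonzero multiple of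
`(Σ_{k ≤ m} ε^k q_i^{2k-m}) (q_i^{n-m} - ε^m q_i^{m-n})`. Local nilpotency of `B` yields a last `m`
with `B^m v ≠ 0`; there `c_m = 0`, and since `q` is transcendental this forces `n = m` and
`ε^m = 1`, so `n ≥ 0`, and `n` is even when `p(i) = 1`. -/

open scoped BigOperators

noncomputable section

/-- The super quantum integer `[m]` at parameter `Q` and parity `pi`. -/
def sInt (pi : ℕ) (Q : K) (m : ℕ) : K :=
  (((-1) ^ pi * Q) ^ m - Q⁻¹ ^ m) / ((-1) ^ pi * Q - Q⁻¹)

/-- The super quantum factorial `[n]!`. -/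
def sFact (pi : ℕ) (Q : K) (n : ℕ) : K := ∏ s ∈ Finset.range n, sInt pi Q (s + 1)

/-- The super quantum binomial coefficient `[n; t] = [n]!/([t]![n-t]!)`. -/
def sBinom (pi : ℕ) (Q : K) (n t : ℕ) : K :=
  sFact pi Q n / (sFact pi Q t * sFact pi Q (n - t))

/-- Generators of the quantum Borcherds--Bozec superalgebra: `a_{il}`, `b_{il}`
for `(i,l) ∈ I^∞`, and `q^h` for `h` in the dual weight lattice `H = P^∨`. -/
inductive Gen (I H : Type) where
  | a : I → ℕ+ → Gen I H
  | b : I → ℕ+ → Gen I H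
  | k : H → Gen I H

/-- The free `ℚ(q)`-algebra on the generators. -/
abbrev FA (I H : Type) := FreeAlgebra K (Gen I H)

/-- The generator `a_{il}`. -/
def Ag {I H : Type} (i : I) (l : ℕ+) : FA I H := FreeAlgebra.ι K (Gen.a i l)

/-- The generator `b_{il}`. -/
def Bg {I H : Type} (i : I) (l : ℕ+) : FA I H := FreeAlgebra.ι K (Gen.b i l)

/-- The generator `q^h`. -/
def Kg {I : Type} {H : Type} (h : H) : FA I H := FreeAlgebra.ι K (Gen.k h)

/-- `q_i = q^{d_i}`. -/
def qi {I : Type} (d : I → ℕ+) (i : I) : K := qq ^ (d i : ℕ)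

/-- `N = 1 - k·a_{ij}` (a natural number when `a_{ij} ≤ 0`). -/
def serreN {I : Type} (a : I → I → ℤ) (i j : I) (k : ℕ+) : ℕ :=
  (1 - (k : ℤ) * a i j).toNat

/-- The defining relations of the quantum Borcherds--Bozec superalgebra
associated with the super Borcherds--Cartan datum `(a, p, d, hi, pair)`,
where `pair h i = ⟨h, α_i⟩` and `hi i = h_i`. -/
inductive QBBRel {I H : Type} [DecidableEq I] [AddCommGroup H]
    (p : I → ℕ) (d : I → ℕ+) (a : I → I → ℤ) (hi : I → H) (pair : H → I → ℤ) :
    FA I H → FA I H → Prop where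
  | kzero : QBBRel p d a hi pair (Kg (0 : H)) 1
  | kadd (h h' : H) : QBBRel p d a hi pair (Kg h * Kg h') (Kg (h + h'))
  | ka (h : H) (i : I) (l : ℕ+) :
      QBBRel p d a hi pair (Kg h * Ag i l * Kg (-h))
        ((qq ^ ((l : ℤ) * pair h i)) • Ag i l)
  | kb (h : H) (i : I) (l : ℕ+) :
      QBBRel p d a hi pair (Kg h * Bg i l * Kg (-h))
        ((qq ^ (-((l : ℤ) * pair h i))) • Bg i l)
  | serreA (i j : I) (k : ℕ+) (hre : a i i = 2) (hne : ¬(j = i ∧ k = 1)) :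
      QBBRel p d a hi pair
        (∑ t ∈ Finset.range (serreN a i j k + 1),
          ((-1 : K) ^ (serreN a i j k - t) *
            (-1 : K) ^ (p i * ((serreN a i j k - t) * ((k : ℕ) * p j) +
              Nat.choose (serreN a i j k - t) 2)) *
            sBinom (p i) (qi d i) (serreN a i j k) (serreN a i j k - t)) •
            (Ag i 1 ^ t * Ag j k * Ag i 1 ^ (serreN a i j k - t))) 0
  | serreB (i j : I) (k : ℕ+) (hre : a i i = 2) (hne : ¬(j = i ∧ k = 1)) :
      QBBRel p d a hi pair
        (∑ t ∈ Finset.range (serreN a i j k + 1),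
          ((-1 : K) ^ (serreN a i j k - t) *
            (-1 : K) ^ (p i * ((serreN a i j k - t) * ((k : ℕ) * p j) +
              Nat.choose (serreN a i j k - t) 2)) *
            sBinom (p i) (qi d i) (serreN a i j k) (serreN a i j k - t)) •
            (Bg i 1 ^ t * Bg j k * Bg i 1 ^ (serreN a i j k - t))) 0
  | commA (i j : I) (l k : ℕ+) (h0 : a i j = 0) :
      QBBRel p d a hi pair (Ag i l * Ag j k)
        (((-1 : K) ^ (((l : ℕ) * p i) * ((k : ℕ) * p j))) • (Ag j k * Ag i l))
  | commB (i j : I) (l k : ℕ+) (h0 : a i j = 0) :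
      QBBRel p d a hi pair (Bg i l * Bg j k)
        (((-1 : K) ^ (((l : ℕ) * p i) * ((k : ℕ) * p j))) • (Bg j k * Bg i l))
  | ab (i j : I) (l k : ℕ+) :
      QBBRel p d a hi pair
        (Ag i l * Bg j k -
          ((-1 : K) ^ (((l : ℕ) * p i) * ((k : ℕ) * p j))) • (Bg j k * Ag i l))
        (if i = j ∧ l = k then
          ((1 - (-1 : K) ^ ((l : ℕ) * p i) * (qi d i) ^ (2 * (l : ℕ)))⁻¹) •
            (Kg (((l : ℤ) * (d i : ℤ)) • hi i) - Kg (-(((l : ℤ) * (d i : ℤ)) • hi i)))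
        else 0)

/-- The quantum Borcherds--Bozec superalgebra `U_q(𝔤)`. -/
abbrev Uq {I H : Type} [DecidableEq I] [AddCommGroup H]
    (p : I → ℕ) (d : I → ℕ+) (a : I → I → ℤ) (hi : I → H) (pair : H → I → ℤ) : Type :=
  RingQuot (QBBRel p d a hi pair)

/-- The canonical map `FA I H → U_q(𝔤)`. -/
abbrev mkU {I H : Type} [DecidableEq I] [AddCommGroup H]
    (p : I → ℕ) (d : I → ℕ+) (a : I → I → ℤ) (hi : I → H) (pair : H → I → ℤ) :
    FA I H →ₐ[K] Uq p d a hi pair :=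
  RingQuot.mkAlgHom K (QBBRel p d a hi pair)

open Finset

lemma RatFunc.intDegree_X_zpow {F : Type*} [Field F] (z : ℤ) :
    (RatFunc.X ^ z : RatFunc F).intDegree = z := by
  have hnat (n : ℕ) : (RatFunc.X ^ n : RatFunc F).intDegree = n := by
    rw [← RatFunc.algebraMap_X, ← map_pow, RatFunc.intDegree_polynomial,
      Polynomial.natDegree_X_pow]
  cases z with
  | ofNat n => simpa using hnat n
  | negSucc n => rw [zpow_negSucc, RatFunc.intDegree_inv, hnat]; rfl

lemma qq_zpow_eq_neg_one_pow_mul_zpow {a b : ℤ} {k : ℕ} (h : qq ^ a = (-1) ^ k * qq ^ b) :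
    a = b ∧ Even k := by
  have hq : qq ^ b ≠ 0 := zpow_ne_zero _ RatFunc.X_ne_zero
  have hab : a = b := by
    have := congrArg RatFunc.intDegree h
    rcases neg_one_pow_eq_or K k with hk | hk <;>
      simpa [hk, qq, RatFunc.intDegree_X_zpow, RatFunc.intDegree_neg] using this
  subst hab
  exact ⟨rfl, (neg_one_pow_eq_one_iff_even (by norm_num)).mp ((mul_eq_right₀ hq).mp h.symm)⟩

lemma neg_one_pow_mul_qq_pow_ne_one {k j : ℕ} (hj : j ≠ 0) : (-1 : K) ^ k * qq ^ j ≠ 1 := by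
  intro h
  have := qq_zpow_eq_neg_one_pow_mul_zpow (a := 0) (b := j) (k := k)
    (by rw [zpow_zero, zpow_natCast, h])
  omega

/-- The closed form of `Σ_{k ≤ m} ε^{m-k} (W r^{-k} - W⁻¹ r^k)`; for `r = q_i²`, `W = q_i^n` it is
`(Σ_{k ≤ m} ε^k q_i^{2k-m}) (q_i^{n-m} - ε^m q_i^{m-n})`. -/
def loweringCoeff {F : Type*} [Field F] (ε r W : F) (m : ℕ) : F :=
  (∑ k ∈ range (m + 1), (ε * r) ^ k) * (W * r⁻¹ ^ m - ε ^ m * W⁻¹)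

lemma loweringCoeff_zero {F : Type*} [Field F] (ε r W : F) :
    loweringCoeff ε r W 0 = W - W⁻¹ := by
  simp [loweringCoeff]

lemma loweringCoeff_succ {F : Type*} [Field F] {ε r : F} (hε : ε * ε = 1) (hr : r ≠ 0)
    (W : F) (m : ℕ) :
    loweringCoeff ε r W (m + 1) =
      ε * loweringCoeff ε r W m + (W * r⁻¹ ^ (m + 1) - (W * r⁻¹ ^ (m + 1))⁻¹) := by
  have hεm : ε ^ (m + 1) * ε ^ (m + 1) = 1 := by rw [← mul_pow, hε, one_pow]
  have hrr : r * r⁻¹ = 1 := mul_inv_cancel₀ hr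
  set G := fun n ↦ ∑ k ∈ range n, (ε * r) ^ k
  have hfirst : G (m + 2) = ε * r * G (m + 1) + 1 := geom_sum_succ
  have hlast : G (m + 2) = (ε * r) ^ (m + 1) + G (m + 1) := geom_sum_succ'
  unfold loweringCoeff
  rw [mul_inv, inv_pow, inv_inv]
  linear_combination W * r⁻¹ ^ (m + 1) * hfirst - ε ^ (m + 1) * W⁻¹ * hlast
    + G (m + 1) * W * ε * r⁻¹ ^ m * hrr - W⁻¹ * r ^ (m + 1) * hεm

lemma eq_and_even_of_loweringCoeff_eq_zero {k e m : ℕ} (he : 0 < e) {n : ℤ}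
    (h : loweringCoeff ((-1) ^ k) ((qq ^ e) ^ 2) ((qq ^ n) ^ e) m = 0) :
    n = m ∧ Even (k * m) := by
  have hq : qq ≠ 0 := RatFunc.X_ne_zero
  have hzpow (j : ℕ) : (qq ^ e) ^ j = qq ^ ((e * j : ℕ) : ℤ) := by
    rw [zpow_natCast, pow_mul]
  rcases mul_eq_zero.mp h with hG | hW
  · have hpow := geom_sum_mul ((-1) ^ k * (qq ^ e) ^ 2) (m + 1)
    rw [hG, zero_mul, eq_comm, sub_eq_zero, mul_pow, ← pow_mul, ← pow_mul, ← pow_mul] at hpow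
    exact absurd hpow (neg_one_pow_mul_qq_pow_ne_one (by positivity))
  · set W := (qq ^ n) ^ e
    set r := (qq ^ e) ^ 2
    have hWW : W * W⁻¹ = 1 := mul_inv_cancel₀ (pow_ne_zero _ (zpow_ne_zero _ hq))
    have hrr : r ^ m * r⁻¹ ^ m = 1 := by
      rw [← mul_pow, mul_inv_cancel₀ (pow_ne_zero _ (pow_ne_zero _ hq)), one_pow]
    have hW2 : qq ^ (n * (2 * e : ℕ)) = (-1) ^ (k * m) * qq ^ ((e * (2 * m) : ℕ) : ℤ) := by
      rw [zpow_mul, zpow_natCast, pow_mul', ← hzpow, pow_mul, pow_mul]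
      linear_combination (W * r ^ m) * hW - W ^ 2 * hrr + ((-1) ^ k) ^ m * r ^ m * hWW
    obtain ⟨hnm, hkm⟩ := qq_zpow_eq_neg_one_pow_mul_zpow hW2
    refine ⟨mul_right_cancel₀ (by positivity : ((2 * e : ℕ) : ℤ) ≠ 0) ?_, hkm⟩
    rw [hnm]
    push_cast
    ring

section Module

variable {F U M : Type*} [CommSemiring F] [Semiring U] [Algebra F U] [AddCommMonoid M]
  [Module U M]

lemma smul_algebraMap_smul (u : U) (c : F) (w : M) :
    u • algebraMap F U c • w = algebraMap F U c • u • w := by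
  rw [← mul_smul, ← Algebra.commutes, mul_smul]

lemma pow_smul_eq_of_smul_eq {u : U} {μ : F} {w : M} (h : u • w = algebraMap F U μ • w)
    (k : ℕ) : u ^ k • w = algebraMap F U (μ ^ k) • w := by
  induction k with
  | zero => simp
  | succ k ih => rw [pow_succ', mul_smul, ih, smul_algebraMap_smul, h, ← mul_smul, ← map_mul,
      pow_succ]

lemma smul_pow_smul_of_mul_eq_smul_mul {k b : U} {c μ : F} {v : M} (hkb : k * b = c • (b * k))
    (hv : k • v = algebraMap F U μ • v) (m : ℕ) :
    k • b ^ m • v = algebraMap F U (c ^ m * μ) • b ^ m • v := by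
  induction m with
  | zero => simpa using hv
  | succ m ih =>
    rw [pow_succ', mul_smul, ← mul_smul k, hkb, Algebra.smul_def, mul_smul, mul_smul, ih,
      smul_algebraMap_smul, ← mul_smul (algebraMap F U c), ← map_mul, pow_succ', mul_assoc]

lemma smul_pow_succ_smul_of_mul_eq_smul_mul_add {a b D : U} {ε : F} {v : M}
    (hab : a * b = ε • (b * a) + D) (ha : a • v = 0) {t c : ℕ → F}
    (hD : ∀ m, D • b ^ m • v = algebraMap F U (t m) • b ^ m • v)
    (hc0 : c 0 = t 0) (hcs : ∀ m, c (m + 1) = ε * c m + t (m + 1)) (m : ℕ) :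
    a • b ^ (m + 1) • v = algebraMap F U (c m) • b ^ m • v := by
  induction m with
  | zero =>
    rw [zero_add, pow_one, ← mul_smul, hab, add_smul, Algebra.smul_def, mul_smul, mul_smul, ha,
      smul_zero, smul_zero, zero_add, hc0]
    simpa using hD 0
  | succ m ih =>
    rw [pow_succ' b (m + 1), mul_smul, ← mul_smul a, hab, add_smul, Algebra.smul_def, mul_smul,
      mul_smul, ih, smul_algebraMap_smul, ← mul_smul b, ← pow_succ', hD, ← mul_smul, ← map_mul,
      ← add_smul, ← map_add, hcs]

end Module

section DivisionModule

variable {F U M : Type*} [Semifield F] [Semiring U] [Algebra F U] [AddCommMonoid M]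
  [Module U M]

lemma eq_zero_of_algebraMap_smul_eq_zero {c : F} (hc : c ≠ 0) {w : M}
    (h : algebraMap F U c • w = 0) : w = 0 := by
  rw [← one_smul U w, ← map_one (algebraMap F U), ← inv_mul_cancel₀ hc, map_mul, mul_smul, h,
    smul_zero]

lemma smul_eq_inv_of_mul_eq_one {u u' : U} {μ : F} {w : M} (hu : u' * u = 1) (hμ : μ ≠ 0)
    (h : u • w = algebraMap F U μ • w) : u' • w = algebraMap F U μ⁻¹ • w := by
  have hw : w = algebraMap F U μ⁻¹ • u • w := by
    rw [h, ← mul_smul, ← map_mul, inv_mul_cancel₀ hμ, map_one, one_smul]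
  calc u' • w = algebraMap F U μ⁻¹ • (u' * u) • w := by
        rw [mul_smul, ← smul_algebraMap_smul, ← hw]
    _ = algebraMap F U μ⁻¹ • w := by rw [hu, one_smul]

end DivisionModule

lemma exists_pow_smul_ne_zero_and_pow_succ_smul_eq_zero {U M : Type*} [Monoid U] [Zero M]
    [MulAction U M] {b : U} {v : M} (hv : v ≠ 0)
    (hnil : ∃ r : ℕ, b ^ r • v = 0) : ∃ m : ℕ, b ^ m • v ≠ 0 ∧ b ^ (m + 1) • v = 0 := by
  classical
  obtain ⟨m, hm⟩ : ∃ m, Nat.find hnil = m + 1 :=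
    Nat.exists_eq_succ_of_ne_zero fun h0 ↦ hv (by simpa [h0] using Nat.find_spec hnil)
  exact ⟨m, Nat.find_min hnil (by omega), hm ▸ Nat.find_spec hnil⟩

section Relations

variable {I H : Type} [DecidableEq I] [AddCommGroup H]
  (p : I → ℕ) (d : I → ℕ+) (a : I → I → ℤ) (hi : I → H) (pair : H → I → ℤ)

lemma mkU_Kg_mul_Kg (h h' : H) :
    mkU p d a hi pair (Kg h) * mkU p d a hi pair (Kg h') = mkU p d a hi pair (Kg (h + h')) := by
  rw [← map_mul, RingQuot.mkAlgHom_rel K (QBBRel.kadd h h')]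

lemma mkU_Kg_zero : mkU p d a hi pair (Kg 0) = 1 := by
  rw [RingQuot.mkAlgHom_rel K QBBRel.kzero, map_one]

lemma mkU_Kg_neg_mul_Kg (h : H) :
    mkU p d a hi pair (Kg (-h)) * mkU p d a hi pair (Kg h) = 1 := by
  rw [mkU_Kg_mul_Kg, neg_add_cancel, mkU_Kg_zero]

lemma mkU_Kg_natCast_zsmul (h : H) (k : ℕ) :
    mkU p d a hi pair (Kg ((k : ℤ) • h)) = mkU p d a hi pair (Kg h) ^ k := by
  induction k with
  | zero => simpa using mkU_Kg_zero p d a hi pair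
  | succ k ih => rw [Nat.cast_succ, add_smul, one_smul, ← mkU_Kg_mul_Kg, ih, pow_succ]

lemma mkU_Kg_mul_Bg (h : H) (i : I) :
    mkU p d a hi pair (Kg h) * mkU p d a hi pair (Bg i 1) =
      qq ^ (-pair h i) • (mkU p d a hi pair (Bg i 1) * mkU p d a hi pair (Kg h)) := by
  have hrel := RingQuot.mkAlgHom_rel K
    (QBBRel.kb (p := p) (d := d) (a := a) (hi := hi) (pair := pair) h i 1)
  rw [map_mul, map_mul, map_smul, PNat.one_coe, Nat.cast_one, one_mul] at hrel
  rw [← smul_mul_assoc, ← hrel, mul_assoc (_ * _), mkU_Kg_neg_mul_Kg, mul_one]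

lemma mkU_Ag_mul_Bg_self (i : I) :
    mkU p d a hi pair (Ag i 1) * mkU p d a hi pair (Bg i 1) =
      (-1 : K) ^ p i • (mkU p d a hi pair (Bg i 1) * mkU p d a hi pair (Ag i 1)) +
      (1 - (-1) ^ p i * qi d i ^ 2)⁻¹ •
        (mkU p d a hi pair (Kg ((d i : ℤ) • hi i)) -
          mkU p d a hi pair (Kg (-((d i : ℤ) • hi i)))) := by
  have hrel := RingQuot.mkAlgHom_rel K (QBBRel.ab (p := p) (d := d) (a := a) (hi := hi)
    (pair := pair) i i 1 1)
  simp only [and_self, if_true, PNat.one_coe, Nat.cast_one, one_mul, mul_one, map_sub, map_smul,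
    map_mul] at hrel
  have hsign : (-1 : K) ^ (p i * p i) = (-1) ^ p i := by
    rcases Nat.even_or_odd (p i) with hp | hp
    · rw [hp.neg_one_pow, (hp.mul_left _).neg_one_pow]
    · rw [hp.neg_one_pow, (hp.mul hp).neg_one_pow]
  rw [← sub_eq_iff_eq_add', ← hrel, hsign]

end Relations

section HighestWeight

variable {I H : Type} [DecidableEq I] [AddCommGroup H]
  {p : I → ℕ} {d : I → ℕ+} {a : I → I → ℤ} {hi : I → H} {pair : H → I → ℤ}
  {M : Type} [AddCommGroup M] [Module (Uq p d a hi pair) M] {v : M}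

lemma Ag_smul_Bg_pow_succ_smul {i : I} (hii : pair (hi i) i = 2) {n : ℤ}
    (hA : mkU p d a hi pair (Ag i 1) • v = 0)
    (hK : mkU p d a hi pair (Kg (hi i)) • v = algebraMap K (Uq p d a hi pair) (qq ^ n) • v)
    (m : ℕ) :
    mkU p d a hi pair (Ag i 1) • mkU p d a hi pair (Bg i 1) ^ (m + 1) • v =
      algebraMap K (Uq p d a hi pair) ((1 - (-1) ^ p i * qi d i ^ 2)⁻¹ *
        loweringCoeff ((-1) ^ p i) (qi d i ^ 2) ((qq ^ n) ^ (d i : ℕ)) m) •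
        mkU p d a hi pair (Bg i 1) ^ m • v := by
  set Φ := mkU p d a hi pair
  set ι := algebraMap K (Uq p d a hi pair)
  set ε : K := (-1) ^ p i
  set r := qi d i ^ 2
  set W := (qq ^ n) ^ (d i : ℕ)
  set δ := (1 - ε * r)⁻¹
  have hq : qq ≠ 0 := RatFunc.X_ne_zero
  have hr : r ≠ 0 := pow_ne_zero _ (pow_ne_zero _ hq)
  have hεε : ε * ε = 1 := by rw [← mul_pow, neg_one_mul, neg_neg, one_pow]
  have hweight (m : ℕ) : Φ (Kg (((d i : ℕ) : ℤ) • hi i)) • Φ (Bg i 1) ^ m • v =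
      ι (W * r⁻¹ ^ m) • Φ (Bg i 1) ^ m • v := by
    rw [mkU_Kg_natCast_zsmul, pow_smul_eq_of_smul_eq
      (smul_pow_smul_of_mul_eq_smul_mul (mkU_Kg_mul_Bg ..) hK m), hii]
    congr 2
    simp only [W, r, qi, zpow_neg, zpow_ofNat]
    ring
  have hweight_neg (m : ℕ) : Φ (Kg (-(((d i : ℕ) : ℤ) • hi i))) • Φ (Bg i 1) ^ m • v =
      ι (W * r⁻¹ ^ m)⁻¹ • Φ (Bg i 1) ^ m • v :=
    smul_eq_inv_of_mul_eq_one (mkU_Kg_neg_mul_Kg ..) (by positivity) (hweight m)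
  refine smul_pow_succ_smul_of_mul_eq_smul_mul_add (mkU_Ag_mul_Bg_self ..) hA
    (t := fun m ↦ δ * (W * r⁻¹ ^ m - (W * r⁻¹ ^ m)⁻¹)) (c := fun m ↦ δ * loweringCoeff ε r W m)
    (fun m ↦ ?_) ?_ (fun m ↦ ?_) m
  · rw [Algebra.smul_def, mul_smul, sub_smul, hweight, hweight_neg, ← sub_smul, ← map_sub,
      ← mul_smul, ← map_mul]
  · simp [loweringCoeff_zero]
  · rw [loweringCoeff_succ hεε hr]
    ring

lemma exists_eq_natCast_and_even_mul_of_Bg_pow_smul_eq_zero {i : I} (hii : pair (hi i) i = 2)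
    {n : ℤ} (hv : v ≠ 0) (hA : mkU p d a hi pair (Ag i 1) • v = 0)
    (hK : mkU p d a hi pair (Kg (hi i)) • v = algebraMap K (Uq p d a hi pair) (qq ^ n) • v)
    (hnil : ∃ r : ℕ, mkU p d a hi pair (Bg i 1) ^ r • v = 0) :
    ∃ m : ℕ, n = m ∧ Even (p i * m) := by
  obtain ⟨m, hne, hzero⟩ := exists_pow_smul_ne_zero_and_pow_succ_smul_eq_zero hv hnil
  have hc := Ag_smul_Bg_pow_succ_smul hii hA hK m
  rw [hzero, smul_zero, eq_comm] at hc
  have hδ : 1 - (-1) ^ p i * qi d i ^ 2 ≠ 0 := by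
    rw [qi, ← pow_mul, sub_ne_zero, ne_comm]
    exact neg_one_pow_mul_qq_pow_ne_one (by positivity)
  have hcoeff : loweringCoeff ((-1) ^ p i) (qi d i ^ 2) ((qq ^ n) ^ (d i : ℕ)) m = 0 := by
    by_contra h
    exact hne (eq_zero_of_algebraMap_smul_eq_zero (mul_ne_zero (inv_ne_zero hδ) h) hc)
  exact ⟨m, eq_and_even_of_loweringCoeff_eq_zero (d i).pos hcoeff⟩

end HighestWeight

theorem highest_weight_dominant_general {I H : Type} [DecidableEq I] [AddCommGroup H]
    (p : I → ℕ) (d : I → ℕ+) (a : I → I → ℤ) (hi : I → H) (pair : H → I → ℤ)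
    (hpair : ∀ i j, pair (hi i) j = a i j)
    -- Borcherds--Cartan condition: every index is real or imaginary:
    (hcartan : ∀ i : I, a i i = 2 ∨ a i i ≤ 0)
    (M : Type) [AddCommGroup M] [Module (Uq p d a hi pair) M]
    (lam : H →+ ℤ)
    (v : M) (hv0 : v ≠ 0)
    -- `v` is a highest weight vector of weight `λ` generating `M`:
    (hhwA : ∀ (i : I) (l : ℕ+), mkU p d a hi pair (Ag i l) • v = 0)
    (hhwK : ∀ h : H,
      mkU p d a hi pair (Kg h) • v =
        (algebraMap K (Uq p d a hi pair) (qq ^ (lam h))) • v)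
    -- `M` lies in `O_int`: `b_i` is locally nilpotent for real `i`, and
    -- `⟨h_i, μ⟩ ≥ 0` for imaginary `i` and every weight `μ` (in particular `λ`):
    (hlocnil : ∀ i : I, a i i = 2 →
      ∀ m : M, ∃ r : ℕ, (mkU p d a hi pair (Bg i 1)) ^ r • m = 0)
    (him : ∀ i : I, a i i ≤ 0 → 0 ≤ lam (hi i)) :
    (∀ i : I, a i i = 2 → 0 ≤ lam (hi i) ∧ (p i = 1 → 2 ∣ lam (hi i))) ∧
    -- `λ ∈ P⁺`:
    ((∀ i : I, 0 ≤ lam (hi i)) ∧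
      (∀ i : I, a i i = 2 → p i = 1 → 2 ∣ lam (hi i))) := by
  have hreal (i : I) (hii : a i i = 2) : 0 ≤ lam (hi i) ∧ (p i = 1 → 2 ∣ lam (hi i)) := by
    obtain ⟨m, hm, heven⟩ := exists_eq_natCast_and_even_mul_of_Bg_pow_smul_eq_zero
      (by rw [hpair, hii]) hv0 (hhwA i 1) (hhwK (hi i)) (hlocnil i hii v)
    refine ⟨hm ▸ Int.natCast_nonneg m, fun hp ↦ ?_⟩
    rw [hp, one_mul, even_iff_two_dvd] at heven
    exact hm ▸ Int.natCast_dvd_natCast.mpr heven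
  exact ⟨hreal, fun i ↦ (hcartan i).elim (fun hii ↦ (hreal i hii).1) (him i),
    fun i hii ↦ (hreal i hii).2⟩

/-- If `V = U_q(𝔤)·v` is a highest weight module in the category `O_int` with
highest weight `λ`, then for every real index `i` (`a_{ii} = 2`) one has
`⟨h_i, λ⟩ ≥ 0`, and if moreover `p(i) = 1` then `⟨h_i, λ⟩` is even;
consequently `λ ∈ P⁺`. -/
theorem highest_weight_dominant {I H : Type} [DecidableEq I] [AddCommGroup H]
    (p : I → ℕ) (d : I → ℕ+) (a : I → I → ℤ) (hi : I → H) (pair : H → I → ℤ)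
    (hpair : ∀ i j, pair (hi i) j = a i j)
    -- Borcherds--Cartan condition: every index is real or imaginary:
    (hcartan : ∀ i : I, a i i = 2 ∨ a i i ≤ 0)
    (M : Type) [AddCommGroup M] [Module (Uq p d a hi pair) M]
    (lam : H →+ ℤ)
    (v : M) (hv0 : v ≠ 0)
    -- `v` is a highest weight vector of weight `λ` generating `M`:
    (hhwA : ∀ (i : I) (l : ℕ+), mkU p d a hi pair (Ag i l) • v = 0)
    (hhwK : ∀ h : H,
      mkU p d a hi pair (Kg h) • v =
        (algebraMap K (Uq p d a hi pair) (qq ^ (lam h))) • v)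
    (hcyc : ∀ m : M, ∃ u : Uq p d a hi pair, u • v = m)
    -- `M` lies in `O_int`: `b_i` is locally nilpotent for real `i`, and
    -- `⟨h_i, μ⟩ ≥ 0` for imaginary `i` and every weight `μ` (in particular `λ`):
    (hlocnil : ∀ i : I, a i i = 2 →
      ∀ m : M, ∃ r : ℕ, (mkU p d a hi pair (Bg i 1)) ^ r • m = 0)
    (him : ∀ i : I, a i i ≤ 0 → 0 ≤ lam (hi i)) :
    (∀ i : I, a i i = 2 → 0 ≤ lam (hi i) ∧ (p i = 1 → 2 ∣ lam (hi i))) ∧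
    -- `λ ∈ P⁺`:
    ((∀ i : I, 0 ≤ lam (hi i)) ∧
      (∀ i : I, a i i = 2 → p i = 1 → 2 ∣ lam (hi i))) :=
  highest_weight_dominant_general p d a hi pair hpair hcartan M lam v hv0 hhwA hhwK hlocnil him
end
end
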